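/- arXiv:math/0303150 — 4 statements merged into one kernel-verified Lean document; each statement's English description precedes it below -/
import Mathlib

section
/- Let ξ be an extremal real number and let (y_i)_{i≥1} be a sequence of approximation triples for ξ. Then there exists a constant c₃ > 0 such that every nonzero primitive point y ∈ ℤ³ with L_ξ(y) ≤ c₃‖y‖^{-1/γ} is of the form y = y_i or y = −y_i for some index i ≥ 1. -/
open Polynomial Matrix

/-- The golden ratio γ = (1+√5)/2. -/
noncomputable def golden : ℝ := (1 + Real.sqrt 5) / 2

/-- Norm of a point of ℤ³: max of absolute values of coordinates. -/
def nrm (x : ℤ × ℤ × ℤ) : ℝ := max |(x.1 : ℝ)| (max |(x.2.1 : ℝ)| |(x.2.2 : ℝ)|)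

/-- L_ξ(x) = max(|x₁ − ξx₀|, |x₂ − ξ²x₀|). -/
noncomputable def Lxi (ξ : ℝ) (x : ℤ × ℤ × ℤ) : ℝ :=
  max |(x.2.1 : ℝ) - ξ * (x.1 : ℝ)| |(x.2.2 : ℝ) - ξ ^ 2 * (x.1 : ℝ)|

/-- det(x) = x₀x₂ − x₁². -/
def det2 (x : ℤ × ℤ × ℤ) : ℤ := x.1 * x.2.2 - x.2.1 ^ 2

/-- Determinant of the 3×3 matrix with rows x, y, z. -/
def det3 (x y z : ℤ × ℤ × ℤ) : ℤ :=
  x.1 * (y.2.1 * z.2.2 - y.2.2 * z.2.1)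
    - x.2.1 * (y.1 * z.2.2 - y.2.2 * z.1)
    + x.2.2 * (y.1 * z.2.1 - y.2.1 * z.1)

/-- A point of ℤ³ is primitive if its coordinates are relatively prime. -/
def Primitive (x : ℤ × ℤ × ℤ) : Prop := Int.gcd x.1 (Int.gcd x.2.1 x.2.2 : ℤ) = 1

/-- ξ is neither rational nor quadratic over ℚ: it is a root of no nonzero
rational polynomial of degree at most 2. -/
def NotQuadratic (ξ : ℝ) : Prop :=
  ∀ p : Polynomial ℚ, p ≠ 0 → p.natDegree ≤ 2 → Polynomial.aeval ξ p ≠ 0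

/-- ξ is an extremal real number. -/
def Extremal (ξ : ℝ) : Prop :=
  NotQuadratic ξ ∧ ∃ c : ℝ, 0 < c ∧ ∀ X : ℝ, 1 ≤ X → ∃ x : ℤ × ℤ × ℤ, x ≠ 0 ∧
    |(x.1 : ℝ)| ≤ X ∧ |(x.1 : ℝ) * ξ - (x.2.1 : ℝ)| ≤ c * X ^ (-1 / golden) ∧
    |(x.1 : ℝ) * ξ ^ 2 - (x.2.2 : ℝ)| ≤ c * X ^ (-1 / golden)

/-- (y_i)_{i≥1} is a sequence of approximation triples for ξ (the value y 0 is irrelevant). -/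
def ApproxTriples (ξ : ℝ) (y : ℕ → ℤ × ℤ × ℤ) : Prop :=
  (∀ i, 1 ≤ i → y i ≠ 0 ∧ Primitive (y i)) ∧
  (∀ B : ℝ, ∃ i, 1 ≤ i ∧ B < nrm (y i)) ∧
  ∃ c : ℝ, 1 ≤ c ∧ ∀ i, 1 ≤ i →
    c⁻¹ * nrm (y i) ^ golden ≤ nrm (y (i + 1)) ∧
    nrm (y (i + 1)) ≤ c * nrm (y i) ^ golden ∧
    c⁻¹ * (nrm (y i))⁻¹ ≤ Lxi ξ (y i) ∧
    Lxi ξ (y i) ≤ c * (nrm (y i))⁻¹ ∧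
    1 ≤ |det2 (y i)| ∧ (|det2 (y i)| : ℝ) ≤ c ∧
    1 ≤ |det3 (y i) (y (i + 1)) (y (i + 2))| ∧
    (|det3 (y i) (y (i + 1)) (y (i + 2))| : ℝ) ≤ c

/-!
Write `X = ‖z‖` and `Y_i = ‖y_i‖`. Subtracting `ξ` and `ξ²` times the first column, a determinant
`det(z, u, v)` is bounded by `‖z‖ L(u) L(v) + ‖u‖ L(z) L(v) + ‖v‖ L(z) L(u)` up to a factor 2.
Since `Y_{i+1} ≍ Y_i^γ` and `L(y_i) ≍ Y_i⁻¹`, choosing the index `i` with `Y_i ≤ K X < Y_{i+1}`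
for a suitable constant `K`, all these terms are small when `L(z) ≤ c₃ X^{-1/γ}`, so the integers
`det(z, y_{i-1}, y_i)` and `det(z, y_i, y_{i+1})` vanish. As `det(y_{i-1}, y_i, y_{i+1}) ≠ 0`, this
forces `z` to be proportional to `y_i`, hence `z = ±y_i` by primitivity. Points `z` of small norm
are excluded by taking `c₃` below the minimum of `L` on them, which is positive as `ξ ∉ ℚ`.
-/

lemma golden_eq_goldenRatio : golden = Real.goldenRatio := rfl

lemma one_lt_golden : 1 < golden := Real.one_lt_goldenRatio

lemma golden_pos : 0 < golden := Real.goldenRatio_pos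

lemma inv_golden : golden⁻¹ = golden - 1 := by
  rw [golden_eq_goldenRatio, Real.inv_goldenRatio, ← Real.one_sub_goldenRatio]
  ring

lemma rpow_golden {Y : ℝ} (hY : 0 < Y) : Y ^ golden = Y ^ golden⁻¹ * Y := by
  rw [← Real.rpow_add_one hY.ne', inv_golden, sub_add_cancel]

lemma rpow_inv_golden_le {K X Y : ℝ} (hK : 1 ≤ K) (hX : 0 ≤ X) (hY : 0 ≤ Y) (h : Y ≤ K * X) :
    Y ^ golden⁻¹ ≤ K * X ^ golden⁻¹ :=
  calc Y ^ golden⁻¹ ≤ (K * X) ^ golden⁻¹ := Real.rpow_le_rpow hY h (inv_nonneg.mpr golden_pos.le)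
    _ = K ^ golden⁻¹ * X ^ golden⁻¹ := Real.mul_rpow (by linarith) hX
    _ ≤ K * X ^ golden⁻¹ := by
        gcongr
        exact Real.rpow_le_self_of_one_le hK (inv_le_one_of_one_le₀ one_lt_golden.le)

lemma two_mul_le_of_rpow_golden_le {c Y Y' : ℝ} (hc : 0 < c) (hY : (2 * c) ^ golden ≤ Y)
    (h : c⁻¹ * Y ^ golden ≤ Y') : 2 * Y ≤ Y' := by
  have hY0 : 0 < Y := (by positivity : (0 : ℝ) < (2 * c) ^ golden).trans_le hY
  have h2c : 2 * c ≤ Y ^ golden⁻¹ :=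
    calc 2 * c = ((2 * c) ^ golden) ^ golden⁻¹ :=
          (Real.rpow_rpow_inv (by positivity) golden_pos.ne').symm
      _ ≤ Y ^ golden⁻¹ := Real.rpow_le_rpow (by positivity) hY (inv_nonneg.mpr golden_pos.le)
  calc 2 * Y = c⁻¹ * (2 * c * Y) := by field_simp
    _ ≤ c⁻¹ * Y ^ golden := by rw [rpow_golden hY0]; gcongr
    _ ≤ Y' := h

lemma le_sq_mul_mul_of_le_rpow_golden {c Y₀ Y₁ Y₂ : ℝ} (hc : 1 ≤ c) (hY₀ : 0 < Y₀) (hY₁ : 0 < Y₁)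
    (h₀₁ : Y₁ ≤ c * Y₀ ^ golden) (h₁₂ : Y₂ ≤ c * Y₁ ^ golden) : Y₂ ≤ c ^ 2 * (Y₀ * Y₁) := by
  have h : Y₁ ^ golden⁻¹ ≤ c * Y₀ := by
    simpa [Real.rpow_rpow_inv hY₀.le golden_pos.ne'] using
      rpow_inv_golden_le hc (by positivity) hY₁.le h₀₁
  calc Y₂ ≤ c * Y₁ ^ golden := h₁₂
    _ = c * (Y₁ ^ golden⁻¹ * Y₁) := by rw [rpow_golden hY₁]
    _ ≤ c * (c * Y₀ * Y₁) := by gcongr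
    _ = c ^ 2 * (Y₀ * Y₁) := by ring

lemma exists_forall_two_mul_le {c : ℝ} {Y : ℕ → ℝ} (hc : 0 < c)
    (hrec : ∀ i, 1 ≤ i → c⁻¹ * Y i ^ golden ≤ Y (i + 1)) (hunb : ∀ B : ℝ, ∃ i, 1 ≤ i ∧ B < Y i) :
    ∃ i₀, 1 ≤ i₀ ∧ ∀ i, i₀ ≤ i → 2 * Y i ≤ Y (i + 1) := by
  obtain ⟨i₀, hi₀, hY⟩ := hunb ((2 * c) ^ golden)
  have hlarge : ∀ i, i₀ ≤ i → (2 * c) ^ golden ≤ Y i := by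
    intro i hi
    induction i, hi using Nat.le_induction with
    | base => exact hY.le
    | succ i hi ih =>
      have h2 := two_mul_le_of_rpow_golden_le hc ih (hrec i (by omega))
      have h0 : (0 : ℝ) ≤ (2 * c) ^ golden := by positivity
      linarith
  exact ⟨i₀, hi₀, fun i hi => two_mul_le_of_rpow_golden_le hc (hlarge i hi) (hrec i (by omega))⟩

lemma exists_le_lt_succ_of_two_mul_le {f : ℕ → ℝ} {i₀ : ℕ} {t : ℝ} (h₀ : 1 ≤ f i₀)
    (hf : ∀ i, i₀ ≤ i → 2 * f i ≤ f (i + 1)) (ht : f i₀ ≤ t) :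
    ∃ i, i₀ ≤ i ∧ f i ≤ t ∧ t < f (i + 1) := by
  classical
  have hlin : ∀ n : ℕ, (n : ℝ) + 1 ≤ f (i₀ + n) := by
    intro n
    induction n with
    | zero => simpa using h₀
    | succ n ih => rw [← add_assoc]; push_cast; linarith [hf (i₀ + n) (by omega)]
  have hex : ∃ n, t < f (i₀ + n) := ⟨⌈t⌉₊, by linarith [Nat.le_ceil t, hlin ⌈t⌉₊]⟩
  obtain ⟨n, hn⟩ : ∃ n, Nat.find hex = n + 1 :=
    Nat.exists_eq_add_one_of_ne_zero fun h => (Nat.find_spec hex).not_ge (by simpa [h] using ht)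
  exact ⟨i₀ + n, by omega, not_lt.mp (Nat.find_min hex (by omega)), by
    simpa [hn, add_assoc] using Nat.find_spec hex⟩

lemma Set.Finite.exists_pos_forall_le {α : Type*} {s : Set α} (hs : s.Finite) {f : α → ℝ}
    (hf : ∀ x ∈ s, 0 < f x) : ∃ m, 0 < m ∧ ∀ x ∈ s, m ≤ f x := by
  rcases s.eq_empty_or_nonempty with rfl | hne
  · exact ⟨1, one_pos, by simp⟩
  · obtain ⟨w, hw, hmin⟩ := Set.exists_min_image s f hs hne
    exact ⟨f w, hf w hw, hmin⟩

lemma NotQuadratic.irrational {ξ : ℝ} (h : NotQuadratic ξ) : Irrational ξ := by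
  rintro ⟨q, rfl⟩
  exact h (X - C q) (X_sub_C_ne_zero q) (by rw [natDegree_X_sub_C]; norm_num) (by simp)

lemma one_le_nrm {x : ℤ × ℤ × ℤ} (hx : x ≠ 0) : 1 ≤ nrm x := by
  obtain ⟨a, b, c⟩ := x
  have key : ∀ n : ℤ, n ≠ 0 → 1 ≤ |(n : ℝ)| := fun n hn => by
    rw [← Int.cast_abs]; exact_mod_cast Int.one_le_abs hn
  by_cases ha : a = 0
  · by_cases hb : b = 0
    · have hc : c ≠ 0 := by rintro rfl; simp [ha, hb] at hx
      exact (key c hc).trans ((le_max_right _ _).trans (le_max_right _ _))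
    · exact (key b hb).trans ((le_max_left _ _).trans (le_max_right _ _))
  · exact (key a ha).trans (le_max_left _ _)

lemma finite_setOf_nrm_le (Z : ℝ) : {x : ℤ × ℤ × ℤ | nrm x ≤ Z}.Finite := by
  refine (Set.finite_Icc (-⌊Z⌋, -⌊Z⌋, -⌊Z⌋) (⌊Z⌋, ⌊Z⌋, ⌊Z⌋)).subset ?_
  rintro ⟨a, b, c⟩ h
  simp only [Set.mem_ofPred_eq, nrm, max_le_iff] at h
  have key : ∀ n : ℤ, |(n : ℝ)| ≤ Z → -⌊Z⌋ ≤ n ∧ n ≤ ⌊Z⌋ := fun n hn =>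
    abs_le.mp (Int.le_floor.mpr (by rwa [Int.cast_abs]))
  simp [Prod.le_def, key a h.1, key b h.2.1, key c h.2.2]

lemma Lxi_pos {ξ : ℝ} (hξ : Irrational ξ) {z : ℤ × ℤ × ℤ} (hz : z ≠ 0) : 0 < Lxi ξ z := by
  obtain ⟨a, b, c⟩ := z
  by_contra! h
  simp only [Lxi, max_le_iff, abs_nonpos_iff, sub_eq_zero] at h
  obtain ⟨hb, hc⟩ := h
  by_cases ha : a = 0
  · subst ha
    simp only [Int.cast_zero, mul_zero, Int.cast_eq_zero] at hb hc
    simp [hb, hc] at hz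
  · exact (irrational_iff_ne_rational ξ).mp hξ b a ha (by field_simp; linarith)

lemma exists_pos_forall_lt_nrm {ξ : ℝ} (hξ : Irrational ξ) (Z : ℝ) :
    ∃ m, 0 < m ∧ ∀ z, z ≠ 0 → Lxi ξ z ≤ m * nrm z ^ (-1 / golden) → Z < nrm z := by
  have hfin : {z | z ≠ 0 ∧ nrm z ≤ Z}.Finite := (finite_setOf_nrm_le Z).subset fun z hz => hz.2
  obtain ⟨m, hm, hle⟩ := hfin.exists_pos_forall_le fun z hz => Lxi_pos hξ hz.1
  refine ⟨m / 2, by positivity, fun z hz hLz => ?_⟩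
  by_contra! hZ
  have h : nrm z ^ (-1 / golden) ≤ 1 := Real.rpow_le_one_of_one_le_of_nonpos (one_le_nrm hz)
    (div_nonpos_of_nonpos_of_nonneg (by norm_num) golden_pos.le)
  linarith [hle z ⟨hz, hZ⟩, hLz.trans (mul_le_of_le_one_right (by positivity) h)]

lemma abs_mul_sub_mul_le {b c d e L L' : ℝ} (hb : |b| ≤ L) (hc : |c| ≤ L') (hd : |d| ≤ L)
    (he : |e| ≤ L') : |b * c - d * e| ≤ 2 * (L * L') :=
  calc |b * c - d * e| ≤ |b| * |c| + |d| * |e| := by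
        rw [← abs_mul, ← abs_mul]; exact abs_sub _ _
    _ ≤ L * L' + L * L' := by
        gcongr <;> exact (abs_nonneg _).trans hb
    _ = 2 * (L * L') := by ring

lemma abs_det3_le (ξ : ℝ) (x u v : ℤ × ℤ × ℤ) :
    |(det3 x u v : ℝ)| ≤ 2 * (nrm x * Lxi ξ u * Lxi ξ v + nrm u * Lxi ξ x * Lxi ξ v
      + nrm v * Lxi ξ x * Lxi ξ u) := by
  let r₁ (w : ℤ × ℤ × ℤ) : ℝ := w.2.1 - ξ * w.1
  let r₂ (w : ℤ × ℤ × ℤ) : ℝ := w.2.2 - ξ ^ 2 * w.1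
  have hterm (w p q : ℤ × ℤ × ℤ) :
      |(w.1 : ℝ) * (r₁ p * r₂ q - r₂ p * r₁ q)| ≤ nrm w * (2 * (Lxi ξ p * Lxi ξ q)) := by
    have hfst : |(w.1 : ℝ)| ≤ nrm w := le_max_left _ _
    rw [abs_mul]
    exact mul_le_mul hfst (abs_mul_sub_mul_le (le_max_left _ _) (le_max_right _ _)
      (le_max_right _ _) (le_max_left _ _)) (abs_nonneg _) ((abs_nonneg _).trans hfst)
  have hcol : (det3 x u v : ℝ) = x.1 * (r₁ u * r₂ v - r₂ u * r₁ v)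
      - u.1 * (r₁ x * r₂ v - r₂ x * r₁ v) + v.1 * (r₁ x * r₂ u - r₂ x * r₁ u) := by
    simp only [det3, r₁, r₂]; push_cast; ring
  rw [hcol]
  refine (abs_add_le _ _).trans ((add_le_add_left (abs_sub _ _) _).trans ?_)
  linarith [hterm x u v, hterm u x v, hterm v x u]

def cross (x y : ℤ × ℤ × ℤ) : ℤ × ℤ × ℤ :=
  (x.2.1 * y.2.2 - x.2.2 * y.2.1, x.2.2 * y.1 - x.1 * y.2.2, x.1 * y.2.1 - x.2.1 * y.1)

/-- `z` is orthogonal to `a × b` and `b × c`, and `(a × b) × (b × c) = det(a, b, c) • b`. -/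
lemma cross_eq_zero_of_det3_eq_zero {a b c z : ℤ × ℤ × ℤ} (h₁ : det3 z a b = 0)
    (h₂ : det3 z b c = 0) (h : det3 a b c ≠ 0) : cross z b = 0 := by
  obtain ⟨a1, a2, a3⟩ := a; obtain ⟨b1, b2, b3⟩ := b; obtain ⟨c1, c2, c3⟩ := c
  obtain ⟨z1, z2, z3⟩ := z
  simp only [det3] at h₁ h₂ h
  simp only [cross, Prod.mk_eq_zero]
  refine ⟨mul_left_cancel₀ h ?_, mul_left_cancel₀ h ?_, mul_left_cancel₀ h ?_⟩
  · linear_combination (-(b2 * c3 - b3 * c2)) * h₁ + (a2 * b3 - a3 * b2) * h₂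
  · linear_combination (b1 * c3 - b3 * c1) * h₁ - (a1 * b3 - a3 * b1) * h₂
  · linear_combination (-(b1 * c2 - b2 * c1)) * h₁ + (a1 * b2 - a2 * b1) * h₂

/-- Bezout gives a linear form `λ` with `λ b = 1`; then `z = λ z • b`, and `λ z = ±1` as `z` is
primitive. -/
lemma Primitive.eq_or_eq_neg_of_cross_eq_zero {z b : ℤ × ℤ × ℤ} (hz : Primitive z)
    (hb : Primitive b) (h : cross z b = 0) : z = b ∨ z = -b := by
  obtain ⟨z1, z2, z3⟩ := z; obtain ⟨b1, b2, b3⟩ := b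
  simp only [cross, Prod.mk_eq_zero, sub_eq_zero] at h
  obtain ⟨h23, h31, h12⟩ := h
  simp only [Primitive] at hz hb
  obtain ⟨α, β, γ, hbez⟩ : ∃ α β γ : ℤ, α * b1 + β * b2 + γ * b3 = 1 := by
    have h₁ := Int.gcd_eq_gcd_ab b1 (Int.gcd b2 b3 : ℤ)
    have h₂ := Int.gcd_eq_gcd_ab b2 b3
    rw [hb, Nat.cast_one] at h₁
    set B := b1.gcdB (b2.gcd b3)
    exact ⟨b1.gcdA (b2.gcd b3), B * b2.gcdA b3, B * b2.gcdB b3, by linear_combination -h₁ - B * h₂⟩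
  set e := α * z1 + β * z2 + γ * z3
  have h1 : z1 = e * b1 := by linear_combination (-z1) * hbez + β * h12 - γ * h31
  have h2 : z2 = e * b2 := by linear_combination (-z2) * hbez - α * h12 + γ * h23
  have h3 : z3 = e * b3 := by linear_combination (-z3) * hbez + α * h31 - β * h23
  have he : e ∣ 1 := by
    rw [← Nat.cast_one, ← hz]
    exact Int.dvd_coe_gcd (h1 ▸ dvd_mul_right e b1)
      (Int.dvd_coe_gcd (h2 ▸ dvd_mul_right e b2) (h3 ▸ dvd_mul_right e b3))
  rcases Int.isUnit_iff.mp (isUnit_of_dvd_one he) with he | he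
  · left; simp [h1, h2, h3, he]
  · right; simp [h1, h2, h3, he]

lemma det3_eq_zero_of_small {ξ c c₃ : ℝ} {z u v : ℤ × ℤ × ℤ} (hc : 1 ≤ c) (hc₃ : 0 ≤ c₃)
    (hc₃c : 64 * c ^ 6 * c₃ ≤ 1) (hz : z ≠ 0) (hu : u ≠ 0) (huv : nrm u ≤ nrm v)
    (hLu : Lxi ξ u ≤ c * (nrm u)⁻¹) (hLv : Lxi ξ v ≤ c * (nrm v)⁻¹)
    (hvu : nrm v ≤ c * nrm u ^ golden) (hlow : 8 * c ^ 4 * nrm z ≤ c ^ 2 * (nrm u * nrm v))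
    (hup : nrm u ≤ 8 * c ^ 4 * nrm z) (hLz : Lxi ξ z ≤ c₃ * nrm z ^ (-1 / golden)) :
    det3 z u v = 0 := by
  set X := nrm z
  set Yu := nrm u
  set Yv := nrm v
  have hX : 1 ≤ X := one_le_nrm hz
  have hYu : 1 ≤ Yu := one_le_nrm hu
  have hYv : 1 ≤ Yv := hYu.trans huv
  have hXγ : 1 ≤ X ^ golden⁻¹ := Real.one_le_rpow hX (inv_nonneg.mpr golden_pos.le)
  have hLz' : Lxi ξ z ≤ c₃ * (X ^ golden⁻¹)⁻¹ := by
    rwa [neg_div, one_div, Real.rpow_neg (by linarith)] at hLz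
  have hLz₃ : Lxi ξ z ≤ c₃ := hLz'.trans (mul_le_of_le_one_right hc₃ (inv_le_one_of_one_le₀ hXγ))
  have hL0 (w : ℤ × ℤ × ℤ) : 0 ≤ Lxi ξ w := (abs_nonneg _).trans (le_max_left _ _)
  have hc6 : c ≤ c ^ 6 := le_self_pow₀ hc (by norm_num)
  have hc4 : 1 ≤ c ^ 4 := one_le_pow₀ hc
  have t₁ : X * Lxi ξ u * Lxi ξ v ≤ 1 / 8 := by
    have h : 8 * c ^ 2 * X ≤ Yu * Yv := le_of_mul_le_mul_left
      (by linarith : c ^ 2 * (8 * c ^ 2 * X) ≤ c ^ 2 * (Yu * Yv)) (by positivity)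
    calc X * Lxi ξ u * Lxi ξ v ≤ X * (c * Yu⁻¹) * (c * Yv⁻¹) := by
          gcongr; exact hL0 _
      _ = c ^ 2 * X / (Yu * Yv) := by field_simp
      _ ≤ 1 / 8 := by rw [div_le_iff₀ (by positivity)]; linarith
  have t₂ : Yu * Lxi ξ z * Lxi ξ v ≤ 1 / 8 :=
    calc Yu * Lxi ξ z * Lxi ξ v ≤ Yv * c₃ * (c * Yv⁻¹) := by
          gcongr <;> exact hL0 _
      _ = c * c₃ := by field_simp
      _ ≤ 1 / 8 := by nlinarith
  have t₃ : Yv * Lxi ξ z * Lxi ξ u ≤ 1 / 8 :=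
    calc Yv * Lxi ξ z * Lxi ξ u ≤ c * Yu ^ golden * (c₃ * (X ^ golden⁻¹)⁻¹) * (c * Yu⁻¹) := by
          gcongr <;> exact hL0 _
      _ = c ^ 2 * c₃ * (Yu ^ golden⁻¹ / X ^ golden⁻¹) := by
          rw [rpow_golden (by linarith)]; field_simp
      _ ≤ c ^ 2 * c₃ * (8 * c ^ 4) := by
          gcongr
          rw [div_le_iff₀ (by linarith)]
          exact rpow_inv_golden_le (by linarith) (by linarith) (by linarith) hup
      _ ≤ 1 / 8 := by nlinarith
  have hdet : |(det3 z u v : ℝ)| < 1 := by linarith [abs_det3_le ξ z u v]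
  exact Int.abs_lt_one_iff.mp (by exact_mod_cast hdet)

lemma eq_or_eq_neg_of_nrm_le_lt {ξ c c₃ : ℝ} {y : ℕ → ℤ × ℤ × ℤ} {z : ℤ × ℤ × ℤ} {a : ℕ}
    (hc : 1 ≤ c) (hc₃ : 0 ≤ c₃) (hc₃c : 64 * c ^ 6 * c₃ ≤ 1)
    (hprim : ∀ i, 1 ≤ i → y i ≠ 0 ∧ Primitive (y i))
    (hup : ∀ i, 1 ≤ i → nrm (y (i + 1)) ≤ c * nrm (y i) ^ golden)
    (hL : ∀ i, 1 ≤ i → Lxi ξ (y i) ≤ c * (nrm (y i))⁻¹) (ha : 1 ≤ a)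
    (hmono : ∀ i, a ≤ i → nrm (y i) ≤ nrm (y (i + 1)))
    (hdet : det3 (y a) (y (a + 1)) (y (a + 2)) ≠ 0)
    (hz : z ≠ 0) (hzp : Primitive z) (hLz : Lxi ξ z ≤ c₃ * nrm z ^ (-1 / golden))
    (hle : nrm (y (a + 1)) ≤ 8 * c ^ 4 * nrm z) (hlt : 8 * c ^ 4 * nrm z < nrm (y (a + 2))) :
    z = y (a + 1) ∨ z = -y (a + 1) := by
  have hY (i : ℕ) (hi : 1 ≤ i) : 1 ≤ nrm (y i) := one_le_nrm (hprim i hi).1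
  have hup₁ : nrm (y (a + 2)) ≤ c * nrm (y (a + 1)) ^ golden := hup (a + 1) (by omega)
  have hdet₀ : det3 z (y a) (y (a + 1)) = 0 :=
    det3_eq_zero_of_small hc hc₃ hc₃c hz (hprim a ha).1 (hmono a le_rfl) (hL a ha)
      (hL (a + 1) (by omega)) (hup a ha) (hlt.le.trans (le_sq_mul_mul_of_le_rpow_golden hc
        (by linarith [hY a ha]) (by linarith [hY (a + 1) (by omega)]) (hup a ha) hup₁))
      ((hmono a le_rfl).trans hle) hLz
  have hc₂ : 1 ≤ c ^ 2 * nrm (y (a + 1)) :=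
    one_le_mul_of_one_le_of_one_le (one_le_pow₀ hc) (hY _ (by omega))
  have hdet₁ : det3 z (y (a + 1)) (y (a + 2)) = 0 :=
    det3_eq_zero_of_small hc hc₃ hc₃c hz (hprim (a + 1) (by omega)).1 (hmono (a + 1) (by omega))
      (hL (a + 1) (by omega)) (hL (a + 2) (by omega)) hup₁
      (by nlinarith [hY (a + 2) (by omega)]) hle hLz
  exact hzp.eq_or_eq_neg_of_cross_eq_zero (hprim _ (by omega)).2
    (cross_eq_zero_of_det3_eq_zero hdet₀ hdet₁ hdet)

/-- Essential uniqueness of the sequence of approximation triples. -/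
theorem stmt6 (ξ : ℝ) (y : ℕ → ℤ × ℤ × ℤ)
    (hξ : Extremal ξ) (hy : ApproxTriples ξ y) :
    ∃ c₃ : ℝ, 0 < c₃ ∧ ∀ z : ℤ × ℤ × ℤ, z ≠ 0 → Primitive z →
      Lxi ξ z ≤ c₃ * nrm z ^ (-1 / golden) →
      ∃ i, 1 ≤ i ∧ (z = y i ∨ z = -y i) := by
  obtain ⟨hprim, hunb, c, hc, hrec⟩ := hy
  obtain ⟨i₀, hi₀, hdbl⟩ := exists_forall_two_mul_le (by linarith) (fun i hi => (hrec i hi).1) hunb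
  obtain ⟨m, hm, hbig⟩ := exists_pos_forall_lt_nrm hξ.1.irrational (nrm (y (i₀ + 1)))
  set c₃ := min (1 / (64 * c ^ 6)) m
  have hc₃ : 0 < c₃ := by positivity
  have hc₃c : 64 * c ^ 6 * c₃ ≤ 1 := by
    rw [← le_div_iff₀' (by positivity)]; exact min_le_left _ _
  refine ⟨c₃, hc₃, fun z hz hzp hLz => ?_⟩
  have hz₀ : nrm (y (i₀ + 1)) < nrm z :=
    hbig z hz (hLz.trans (mul_le_mul_of_nonneg_right (min_le_right _ _)
      (Real.rpow_nonneg (zero_le_one.trans (one_le_nrm hz)) _)))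
  obtain ⟨j, hj, hle, hlt⟩ := exists_le_lt_succ_of_two_mul_le (f := fun i => nrm (y i))
    (i₀ := i₀ + 1) (t := 8 * c ^ 4 * nrm z) (one_le_nrm (hprim _ (by omega)).1)
    (fun i hi => hdbl i (by omega)) (by nlinarith [one_le_pow₀ (n := 4) hc, one_le_nrm hz])
  obtain ⟨a, rfl⟩ : ∃ a, j = a + 1 := ⟨j - 1, by omega⟩
  have hdet : det3 (y a) (y (a + 1)) (y (a + 2)) ≠ 0 := fun h => by
    simpa [h] using (hrec a (by omega)).2.2.2.2.2.2.1
  refine ⟨a + 1, by omega, eq_or_eq_neg_of_nrm_le_lt hc hc₃.le hc₃c hprim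
    (fun i hi => (hrec i hi).2.1) (fun i hi => (hrec i hi).2.2.2.1) (by omega)
    (fun i hi => ?_) hdet hz hzp hLz hle hlt⟩
  linarith [hdbl i (by omega), one_le_nrm (hprim i (by omega)).1]
end

section
/- Let ξ be an extremal real number and let (y_i)_{i≥1} be a sequence of approximation triples for ξ. Then there exists an index i₁ such that for all i ≥ i₁ one has det(y_i, y_{i+1}, [y_{i+3}, y_{i+3}, y_{i+4}]) = 0 and det(y_{i+1}, y_{i+2}, [y_{i+3}, y_{i+3}, y_{i+4}]) = 0. -/
open Polynomial Matrix

/-- [x, x, z] = x · Adj(z) · x under the identification of points of ℤ³ with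
symmetric 2×2 matrices, written out as a point of ℤ³. -/
def brkt (x z : ℤ × ℤ × ℤ) : ℤ × ℤ × ℤ :=
  ((x.1 * z.2.2 - x.2.1 * z.2.1) * x.1 + (x.2.1 * z.1 - x.1 * z.2.1) * x.2.1,
   (x.1 * z.2.2 - x.2.1 * z.2.1) * x.2.1 + (x.2.1 * z.1 - x.1 * z.2.1) * x.2.2,
   (x.2.1 * z.2.2 - x.2.2 * z.2.1) * x.2.1 + (x.2.2 * z.1 - x.2.1 * z.2.1) * x.2.2)

section Helpers

lemma golden_lb : (1.61:ℝ) ≤ golden := by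
  have h5 : Real.sqrt 5 ^ 2 = 5 := Real.sq_sqrt (by norm_num)
  have h0 : 0 ≤ Real.sqrt 5 := Real.sqrt_nonneg 5
  unfold golden; nlinarith

lemma golden_ub : golden ≤ (1.62:ℝ) := by
  have h5 : Real.sqrt 5 ^ 2 = 5 := Real.sq_sqrt (by norm_num)
  have h0 : 0 ≤ Real.sqrt 5 := Real.sqrt_nonneg 5
  unfold golden; nlinarith

lemma int_abs_lt_one {n : ℤ} (h : |(n:ℝ)| < 1) : n = 0 := by
  have h2 : ((|n|:ℤ):ℝ) < 1 := by rwa [← Int.cast_abs] at h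
  have h3 : |n| < 1 := by exact_mod_cast h2
  rw [abs_lt] at h3
  omega

lemma nrm_fst (x : ℤ × ℤ × ℤ) : |(x.1:ℝ)| ≤ nrm x := le_max_left _ _

lemma Lxi_nonneg (ξ : ℝ) (x : ℤ × ℤ × ℤ) : 0 ≤ Lxi ξ x :=
  le_trans (abs_nonneg _) (le_max_left _ _)

lemma Lxi_fst (ξ : ℝ) (x : ℤ × ℤ × ℤ) : |(x.2.1:ℝ) - ξ * x.1| ≤ Lxi ξ x := le_max_left _ _
lemma Lxi_snd (ξ : ℝ) (x : ℤ × ℤ × ℤ) : |(x.2.2:ℝ) - ξ^2 * x.1| ≤ Lxi ξ x := le_max_right _ _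

lemma abs_sub' (x y : ℝ) : |x - y| ≤ |x| + |y| := by
  calc |x - y| = |x + -y| := by ring_nf
    _ ≤ |x| + |-y| := abs_add_le x (-y)
    _ = |x| + |y| := by rw [abs_neg]

lemma abs_mul3_le {a b c A B C : ℝ} (ha : |a| ≤ A) (hb : |b| ≤ B) (hc : |c| ≤ C) :
    |a * b * c| ≤ A * B * C := by
  rw [abs_mul, abs_mul]
  have hA : 0 ≤ A := (abs_nonneg a).trans ha
  have hB : 0 ≤ B := (abs_nonneg b).trans hb
  exact mul_le_mul (mul_le_mul ha hb (abs_nonneg b) hA) hc (abs_nonneg c) (by positivity)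

lemma chain_up {c d A B C p q : ℝ} (hc : 1 ≤ c) (hd : 1 ≤ d) (hA : 1 ≤ A) (hB : 0 ≤ B)
    (hBA : B ≤ d * A ^ p) (hCB : C ≤ c * B ^ golden) (hp : 0 ≤ p) (hpq : 1.62 * p ≤ q) :
    C ≤ c * d ^ 2 * A ^ q := by
  have hA0 : (0:ℝ) < A := lt_of_lt_of_le one_pos hA
  have hg0 : (0:ℝ) ≤ golden := by linarith [golden_lb]
  have h1 : B ^ golden ≤ (d * A ^ p) ^ golden := Real.rpow_le_rpow hB hBA hg0
  have h2 : (d * A ^ p) ^ golden = d ^ golden * (A ^ p) ^ golden :=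
    Real.mul_rpow (by linarith) (by positivity)
  have h3 : d ^ golden ≤ d ^ 2 := by
    have h := Real.rpow_le_rpow_of_exponent_le hd (golden_ub.trans (by norm_num : (1.62:ℝ) ≤ 2))
    rwa [Real.rpow_two] at h
  have h4 : (A ^ p) ^ golden ≤ A ^ q := by
    rw [← Real.rpow_mul hA0.le]
    exact Real.rpow_le_rpow_of_exponent_le hA (by nlinarith [golden_ub])
  calc C ≤ c * B ^ golden := hCB
    _ ≤ c * (d ^ 2 * A ^ q) := by
        have hc0 : (0:ℝ) ≤ c := by linarith
        refine mul_le_mul_of_nonneg_left ?_ hc0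
        calc B ^ golden ≤ d ^ golden * (A ^ p) ^ golden := by rw [← h2]; exact h1
          _ ≤ d ^ 2 * A ^ q := mul_le_mul h3 h4 (by positivity) (by positivity)
    _ = c * d ^ 2 * A ^ q := by ring

lemma chain_lo {c d A B C p q : ℝ} (hc : 1 ≤ c) (hd : 1 ≤ d) (hA : 1 ≤ A) (hB : 1 ≤ B)
    (hBA : d⁻¹ * A ^ p ≤ B) (hCB : c⁻¹ * B ^ golden ≤ C) (hq0 : 0 ≤ q) (hq : q ≤ 1.61 * p) :
    (c * d ^ 2)⁻¹ * A ^ q ≤ C := by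
  have hA0 : (0:ℝ) < A := lt_of_lt_of_le one_pos hA
  have hd0 : (0:ℝ) < d := lt_of_lt_of_le one_pos hd
  have h1 : (d⁻¹ * A ^ p) ^ (1.61:ℝ) ≤ B ^ (1.61:ℝ) :=
    Real.rpow_le_rpow (by positivity) hBA (by norm_num)
  have h1b : B ^ (1.61:ℝ) ≤ B ^ golden := Real.rpow_le_rpow_of_exponent_le hB golden_lb
  have h2 : (d⁻¹ * A ^ p) ^ (1.61:ℝ) = d⁻¹ ^ (1.61:ℝ) * (A ^ p) ^ (1.61:ℝ) :=
    Real.mul_rpow (by positivity) (by positivity)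
  have h3 : (d ^ 2)⁻¹ ≤ d⁻¹ ^ (1.61:ℝ) := by
    have hinv1 : d⁻¹ ≤ 1 := inv_le_one_of_one_le₀ hd
    have h := Real.rpow_le_rpow_of_exponent_ge (by positivity) hinv1
      (by norm_num : (1.61:ℝ) ≤ 2)
    calc (d ^ 2)⁻¹ = d⁻¹ ^ (2:ℝ) := by
          rw [Real.rpow_two, inv_pow]
      _ ≤ d⁻¹ ^ (1.61:ℝ) := h
  have h4 : A ^ q ≤ (A ^ p) ^ (1.61:ℝ) := by
    rw [← Real.rpow_mul hA0.le]
    exact Real.rpow_le_rpow_of_exponent_le hA (by linarith)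
  have hc0 : (0:ℝ) < c := lt_of_lt_of_le one_pos hc
  calc (c * d ^ 2)⁻¹ * A ^ q = c⁻¹ * ((d ^ 2)⁻¹ * A ^ q) := by rw [mul_inv]; ring
    _ ≤ c⁻¹ * (d⁻¹ ^ (1.61:ℝ) * (A ^ p) ^ (1.61:ℝ)) := by
        refine mul_le_mul_of_nonneg_left ?_ (by positivity)
        exact mul_le_mul h3 h4 (by positivity) (by positivity)
    _ = c⁻¹ * (d⁻¹ * A ^ p) ^ (1.61:ℝ) := by rw [h2]
    _ ≤ c⁻¹ * B ^ golden := by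
        refine mul_le_mul_of_nonneg_left (h1.trans h1b) (by positivity)
    _ ≤ C := hCB

lemma inv_bound {d A B p : ℝ} (hA : 0 < A) (hB : 0 < B) (hd : 0 < d)
    (h : d⁻¹ * A ^ p ≤ B) : B⁻¹ ≤ d * A ^ (-p) := by
  have h0 : (0:ℝ) < d⁻¹ * A ^ p := by positivity
  have h1 : B⁻¹ ≤ (d⁻¹ * A ^ p)⁻¹ := by
    exact inv_anti₀ h0 h
  rw [mul_inv, inv_inv] at h1
  rwa [Real.rpow_neg hA.le]

lemma tri_bound {A : ℝ} (hA : 1 ≤ A) {x1 x2 x3 e1 e2 e3 p1 p2 p3 s : ℝ}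
    (h1 : 0 ≤ x1) (h2 : 0 ≤ x2) (h3 : 0 ≤ x3)
    (he1 : 0 ≤ e1) (he2 : 0 ≤ e2) (he3 : 0 ≤ e3)
    (b1 : x1 ≤ e1 * A ^ p1) (b2 : x2 ≤ e2 * A ^ p2) (b3 : x3 ≤ e3 * A ^ p3)
    (hs : p1 + p2 + p3 ≤ s) :
    x1 * (x2 * x3) ≤ e1 * (e2 * e3) * A ^ s := by
  have hA0 : (0:ℝ) < A := lt_of_lt_of_le one_pos hA
  have step : x1 * (x2 * x3) ≤ (e1 * A ^ p1) * ((e2 * A ^ p2) * (e3 * A ^ p3)) := by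
    refine mul_le_mul b1 (mul_le_mul b2 b3 h3 (by positivity)) (by positivity) (by positivity)
  refine step.trans ?_
  have e : (e1 * A ^ p1) * ((e2 * A ^ p2) * (e3 * A ^ p3))
      = e1 * (e2 * e3) * (A ^ p1 * A ^ p2 * A ^ p3) := by ring
  rw [e, ← Real.rpow_add hA0, ← Real.rpow_add hA0]
  refine mul_le_mul_of_nonneg_left ?_ (by positivity)
  exact Real.rpow_le_rpow_of_exponent_le hA hs

lemma relax_const {B A e f p : ℝ} (h : B ≤ e * A ^ p) (hef : e ≤ f) (hA : 0 ≤ A) :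
    B ≤ f * A ^ p :=
  h.trans (mul_le_mul_of_nonneg_right hef (Real.rpow_nonneg hA p))

end Helpers
section Bounds

lemma det3_bound (ξ : ℝ) (a b w : ℤ × ℤ × ℤ) :
    |(det3 a b w : ℝ)| ≤
      2 * (nrm a * (Lxi ξ b * Lxi ξ w) + nrm b * (Lxi ξ a * Lxi ξ w)
        + |(w.1:ℝ)| * (Lxi ξ a * Lxi ξ b)) := by
  set pa1 := (a.2.1:ℝ) - ξ * a.1 with hpa1
  set pa2 := (a.2.2:ℝ) - ξ^2 * a.1 with hpa2
  set pb1 := (b.2.1:ℝ) - ξ * b.1 with hpb1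
  set pb2 := (b.2.2:ℝ) - ξ^2 * b.1 with hpb2
  set pw1 := (w.2.1:ℝ) - ξ * w.1 with hpw1
  set pw2 := (w.2.2:ℝ) - ξ^2 * w.1 with hpw2
  have e : (det3 a b w : ℝ) =
      (a.1:ℝ) * pb1 * pw2 - (a.1:ℝ) * pb2 * pw1
      - (b.1:ℝ) * pa1 * pw2 + (b.1:ℝ) * pa2 * pw1
      + (w.1:ℝ) * pa1 * pb2 - (w.1:ℝ) * pa2 * pb1 := by
    rw [hpa1, hpa2, hpb1, hpb2, hpw1, hpw2]
    push_cast [det3]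
    ring
  have ha : |(a.1:ℝ)| ≤ nrm a := nrm_fst a
  have hb : |(b.1:ℝ)| ≤ nrm b := nrm_fst b
  have hw : |(w.1:ℝ)| ≤ |(w.1:ℝ)| := le_refl _
  have hA1 : |pa1| ≤ Lxi ξ a := Lxi_fst ξ a
  have hA2 : |pa2| ≤ Lxi ξ a := Lxi_snd ξ a
  have hB1 : |pb1| ≤ Lxi ξ b := Lxi_fst ξ b
  have hB2 : |pb2| ≤ Lxi ξ b := Lxi_snd ξ b
  have hW1 : |pw1| ≤ Lxi ξ w := Lxi_fst ξ w
  have hW2 : |pw2| ≤ Lxi ξ w := Lxi_snd ξ w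
  have t1 : |(a.1:ℝ) * pb1 * pw2| ≤ nrm a * Lxi ξ b * Lxi ξ w := abs_mul3_le ha hB1 hW2
  have t2 : |(a.1:ℝ) * pb2 * pw1| ≤ nrm a * Lxi ξ b * Lxi ξ w := abs_mul3_le ha hB2 hW1
  have t3 : |(b.1:ℝ) * pa1 * pw2| ≤ nrm b * Lxi ξ a * Lxi ξ w := abs_mul3_le hb hA1 hW2
  have t4 : |(b.1:ℝ) * pa2 * pw1| ≤ nrm b * Lxi ξ a * Lxi ξ w := abs_mul3_le hb hA2 hW1
  have t5 : |(w.1:ℝ) * pa1 * pb2| ≤ |(w.1:ℝ)| * Lxi ξ a * Lxi ξ b := abs_mul3_le hw hA1 hB2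
  have t6 : |(w.1:ℝ) * pa2 * pb1| ≤ |(w.1:ℝ)| * Lxi ξ a * Lxi ξ b := abs_mul3_le hw hA2 hB1
  rw [e]
  have tri : |(a.1:ℝ) * pb1 * pw2 - (a.1:ℝ) * pb2 * pw1
      - (b.1:ℝ) * pa1 * pw2 + (b.1:ℝ) * pa2 * pw1
      + (w.1:ℝ) * pa1 * pb2 - (w.1:ℝ) * pa2 * pb1|
      ≤ |(a.1:ℝ) * pb1 * pw2| + |(a.1:ℝ) * pb2 * pw1|
      + |(b.1:ℝ) * pa1 * pw2| + |(b.1:ℝ) * pa2 * pw1|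
      + |(w.1:ℝ) * pa1 * pb2| + |(w.1:ℝ) * pa2 * pb1| := by
    calc |(a.1:ℝ) * pb1 * pw2 - (a.1:ℝ) * pb2 * pw1
        - (b.1:ℝ) * pa1 * pw2 + (b.1:ℝ) * pa2 * pw1
        + (w.1:ℝ) * pa1 * pb2 - (w.1:ℝ) * pa2 * pb1|
        ≤ |(a.1:ℝ) * pb1 * pw2 - (a.1:ℝ) * pb2 * pw1
        - (b.1:ℝ) * pa1 * pw2 + (b.1:ℝ) * pa2 * pw1
        + (w.1:ℝ) * pa1 * pb2| + |(w.1:ℝ) * pa2 * pb1| := abs_sub' _ _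
      _ ≤ (|(a.1:ℝ) * pb1 * pw2 - (a.1:ℝ) * pb2 * pw1
        - (b.1:ℝ) * pa1 * pw2 + (b.1:ℝ) * pa2 * pw1|
        + |(w.1:ℝ) * pa1 * pb2|) + |(w.1:ℝ) * pa2 * pb1| := by
          have := abs_add_le ((a.1:ℝ) * pb1 * pw2 - (a.1:ℝ) * pb2 * pw1
            - (b.1:ℝ) * pa1 * pw2 + (b.1:ℝ) * pa2 * pw1) ((w.1:ℝ) * pa1 * pb2)
          linarith
      _ ≤ ((|(a.1:ℝ) * pb1 * pw2 - (a.1:ℝ) * pb2 * pw1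
        - (b.1:ℝ) * pa1 * pw2| + |(b.1:ℝ) * pa2 * pw1|)
        + |(w.1:ℝ) * pa1 * pb2|) + |(w.1:ℝ) * pa2 * pb1| := by
          have := abs_add_le ((a.1:ℝ) * pb1 * pw2 - (a.1:ℝ) * pb2 * pw1
            - (b.1:ℝ) * pa1 * pw2) ((b.1:ℝ) * pa2 * pw1)
          linarith
      _ ≤ (((|(a.1:ℝ) * pb1 * pw2 - (a.1:ℝ) * pb2 * pw1| + |(b.1:ℝ) * pa1 * pw2|)
        + |(b.1:ℝ) * pa2 * pw1|) + |(w.1:ℝ) * pa1 * pb2|) + |(w.1:ℝ) * pa2 * pb1| := by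
          have := abs_sub' ((a.1:ℝ) * pb1 * pw2 - (a.1:ℝ) * pb2 * pw1) ((b.1:ℝ) * pa1 * pw2)
          linarith
      _ ≤ ((((|(a.1:ℝ) * pb1 * pw2| + |(a.1:ℝ) * pb2 * pw1|) + |(b.1:ℝ) * pa1 * pw2|)
        + |(b.1:ℝ) * pa2 * pw1|) + |(w.1:ℝ) * pa1 * pb2|) + |(w.1:ℝ) * pa2 * pb1| := by
          have := abs_sub' ((a.1:ℝ) * pb1 * pw2) ((a.1:ℝ) * pb2 * pw1)
          linarith
      _ = |(a.1:ℝ) * pb1 * pw2| + |(a.1:ℝ) * pb2 * pw1|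
        + |(b.1:ℝ) * pa1 * pw2| + |(b.1:ℝ) * pa2 * pw1|
        + |(w.1:ℝ) * pa1 * pb2| + |(w.1:ℝ) * pa2 * pb1| := by ring
  calc |(a.1:ℝ) * pb1 * pw2 - (a.1:ℝ) * pb2 * pw1
      - (b.1:ℝ) * pa1 * pw2 + (b.1:ℝ) * pa2 * pw1
      + (w.1:ℝ) * pa1 * pb2 - (w.1:ℝ) * pa2 * pb1|
      ≤ |(a.1:ℝ) * pb1 * pw2| + |(a.1:ℝ) * pb2 * pw1|
      + |(b.1:ℝ) * pa1 * pw2| + |(b.1:ℝ) * pa2 * pw1|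
      + |(w.1:ℝ) * pa1 * pb2| + |(w.1:ℝ) * pa2 * pb1| := tri
    _ ≤ 2 * (nrm a * (Lxi ξ b * Lxi ξ w) + nrm b * (Lxi ξ a * Lxi ξ w)
        + |(w.1:ℝ)| * (Lxi ξ a * Lxi ξ b)) := by nlinarith [t1, t2, t3, t4, t5, t6]

end Bounds
section BracketBounds

lemma abs_xmul (ξ : ℝ) {x0 D : ℝ} (hx0 : |x0| ≤ D) : |ξ * x0| ≤ |ξ| * D := by
  rw [abs_mul]; exact mul_le_mul_of_nonneg_left hx0 (abs_nonneg ξ)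

lemma brkt_w0_bound (ξ : ℝ) (x z : ℤ × ℤ × ℤ) :
    |((brkt x z).1 : ℝ)| ≤ 4 * (1 + |ξ|) *
      (nrm z * (Lxi ξ x * Lxi ξ x) + nrm x * (Lxi ξ x * Lxi ξ z)
        + nrm x * (nrm x * Lxi ξ z)) := by
  set x0 := (x.1:ℝ); set z0 := (z.1:ℝ)
  set u1 := (x.2.1:ℝ) - ξ * x.1 with hu1d
  set v1 := (z.2.1:ℝ) - ξ * z.1 with hv1d
  set v2 := (z.2.2:ℝ) - ξ^2 * z.1 with hv2d
  set D := nrm x; set E := nrm z; set Ld := Lxi ξ x; set Le := Lxi ξ z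
  have hx0 : |x0| ≤ D := nrm_fst x
  have hz0 : |z0| ≤ E := nrm_fst z
  have hu1 : |u1| ≤ Ld := Lxi_fst ξ x
  have hv1 : |v1| ≤ Le := Lxi_fst ξ z
  have hv2 : |v2| ≤ Le := Lxi_snd ξ z
  have hq : (0:ℝ) ≤ |ξ| := abs_nonneg ξ
  have e : ((brkt x z).1 : ℝ) =
      u1*u1*z0 - 2*(x0*u1*v1) + x0*x0*v2 - 2*((ξ*x0)*x0*v1) := by
    simp only [brkt, hu1d, hv1d, hv2d]
    push_cast
    ring
  have m1 := abs_le.mp (abs_mul3_le hu1 hu1 hz0)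
  have m2 := abs_le.mp (abs_mul3_le hx0 hu1 hv1)
  have m3 := abs_le.mp (abs_mul3_le hx0 hx0 hv2)
  have m4 := abs_le.mp (abs_mul3_le (abs_xmul ξ hx0) hx0 hv1)
  have hD : (0:ℝ) ≤ D := (abs_nonneg _).trans hx0
  have hE : (0:ℝ) ≤ E := (abs_nonneg _).trans hz0
  have hLd : (0:ℝ) ≤ Ld := Lxi_nonneg ξ x
  have hLe : (0:ℝ) ≤ Le := Lxi_nonneg ξ z
  have nn1 := mul_nonneg hq (mul_nonneg hE (mul_nonneg hLd hLd))
  have nn2 := mul_nonneg hq (mul_nonneg hD (mul_nonneg hLd hLe))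
  have nn3 := mul_nonneg hq (mul_nonneg hD (mul_nonneg hD hLe))
  have nn4 := mul_nonneg hE (mul_nonneg hLd hLd)
  have nn5 := mul_nonneg hD (mul_nonneg hLd hLe)
  have nn6 := mul_nonneg hD (mul_nonneg hD hLe)
  rw [e, abs_le]
  constructor
  · linarith [m1.1, m1.2, m2.1, m2.2, m3.1, m3.2, m4.1, m4.2]
  · linarith [m1.1, m1.2, m2.1, m2.2, m3.1, m3.2, m4.1, m4.2]

lemma brkt_L_bound (ξ : ℝ) (x z : ℤ × ℤ × ℤ) :
    Lxi ξ (brkt x z) ≤ 4 * (1 + |ξ|) *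
      (nrm z * (Lxi ξ x * Lxi ξ x) + Lxi ξ x * (Lxi ξ x * Lxi ξ z)
        + nrm x * (Lxi ξ x * Lxi ξ z)) := by
  set x0 := (x.1:ℝ); set z0 := (z.1:ℝ)
  set u1 := (x.2.1:ℝ) - ξ * x.1 with hu1d
  set u2 := (x.2.2:ℝ) - ξ^2 * x.1 with hu2d
  set v1 := (z.2.1:ℝ) - ξ * z.1 with hv1d
  set v2 := (z.2.2:ℝ) - ξ^2 * z.1 with hv2d
  set D := nrm x; set E := nrm z; set Ld := Lxi ξ x; set Le := Lxi ξ z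
  have hx0 : |x0| ≤ D := nrm_fst x
  have hz0 : |z0| ≤ E := nrm_fst z
  have hu1 : |u1| ≤ Ld := Lxi_fst ξ x
  have hu2 : |u2| ≤ Ld := Lxi_snd ξ x
  have hv1 : |v1| ≤ Le := Lxi_fst ξ z
  have hv2 : |v2| ≤ Le := Lxi_snd ξ z
  have hq : (0:ℝ) ≤ |ξ| := abs_nonneg ξ
  have hD : (0:ℝ) ≤ D := (abs_nonneg _).trans hx0
  have hE : (0:ℝ) ≤ E := (abs_nonneg _).trans hz0
  have hLd : (0:ℝ) ≤ Ld := Lxi_nonneg ξ x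
  have hLe : (0:ℝ) ≤ Le := Lxi_nonneg ξ z
  have nn1 := mul_nonneg hq (mul_nonneg hE (mul_nonneg hLd hLd))
  have nn2 := mul_nonneg hq (mul_nonneg hLd (mul_nonneg hLd hLe))
  have nn3 := mul_nonneg hq (mul_nonneg hD (mul_nonneg hLd hLe))
  have nn4 := mul_nonneg hE (mul_nonneg hLd hLd)
  have nn5 := mul_nonneg hLd (mul_nonneg hLd hLe)
  have nn6 := mul_nonneg hD (mul_nonneg hLd hLe)
  have e1 : ((brkt x z).2.1 : ℝ) - ξ * ((brkt x z).1 : ℝ) =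
      u1*u2*z0 - u1*u1*v1 - 2*((ξ*u1)*u1*z0) - x0*u2*v1 + x0*u1*v2 := by
    simp only [brkt, hu1d, hu2d, hv1d, hv2d]
    push_cast
    ring
  have e2 : ((brkt x z).2.2 : ℝ) - ξ^2 * ((brkt x z).1 : ℝ) =
      u2*u2*z0 - 2*(u1*u2*v1) - 2*((ξ*u1)*u2*z0) + u1*u1*v2
      - 2*((ξ*x0)*u2*v1) + 2*((ξ*x0)*u1*v2) := by
    simp only [brkt, hu1d, hu2d, hv1d, hv2d]
    push_cast
    ring
  have b1 : |((brkt x z).2.1 : ℝ) - ξ * ((brkt x z).1 : ℝ)| ≤ 4 * (1 + |ξ|) *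
      (E * (Ld * Ld) + Ld * (Ld * Le) + D * (Ld * Le)) := by
    have m1 := abs_le.mp (abs_mul3_le hu1 hu2 hz0)
    have m2 := abs_le.mp (abs_mul3_le hu1 hu1 hv1)
    have m3 := abs_le.mp (abs_mul3_le (abs_xmul ξ hu1) hu1 hz0)
    have m4 := abs_le.mp (abs_mul3_le hx0 hu2 hv1)
    have m5 := abs_le.mp (abs_mul3_le hx0 hu1 hv2)
    rw [e1, abs_le]
    constructor
    · linarith [m1.1, m1.2, m2.1, m2.2, m3.1, m3.2, m4.1, m4.2, m5.1, m5.2]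
    · linarith [m1.1, m1.2, m2.1, m2.2, m3.1, m3.2, m4.1, m4.2, m5.1, m5.2]
  have b2 : |((brkt x z).2.2 : ℝ) - ξ^2 * ((brkt x z).1 : ℝ)| ≤ 4 * (1 + |ξ|) *
      (E * (Ld * Ld) + Ld * (Ld * Le) + D * (Ld * Le)) := by
    have m1 := abs_le.mp (abs_mul3_le hu2 hu2 hz0)
    have m2 := abs_le.mp (abs_mul3_le hu1 hu2 hv1)
    have m3 := abs_le.mp (abs_mul3_le (abs_xmul ξ hu1) hu2 hz0)
    have m4 := abs_le.mp (abs_mul3_le hu1 hu1 hv2)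
    have m5 := abs_le.mp (abs_mul3_le (abs_xmul ξ hx0) hu2 hv1)
    have m6 := abs_le.mp (abs_mul3_le (abs_xmul ξ hx0) hu1 hv2)
    rw [e2, abs_le]
    constructor
    · linarith [m1.1, m1.2, m2.1, m2.2, m3.1, m3.2, m4.1, m4.2, m5.1, m5.2, m6.1, m6.2]
    · linarith [m1.1, m1.2, m2.1, m2.2, m3.1, m3.2, m4.1, m4.2, m5.1, m5.2, m6.1, m6.2]
  exact max_le b1 b2

end BracketBounds
set_option maxHeartbeats 1000000 in
/-- The relations det(y_i, y_{i+1}, [y_{i+3}, y_{i+3}, y_{i+4}]) = 0 and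
det(y_{i+1}, y_{i+2}, [y_{i+3}, y_{i+3}, y_{i+4}]) = 0 for all large i. -/
theorem stmt7 (ξ : ℝ) (y : ℕ → ℤ × ℤ × ℤ)
    (hξ : Extremal ξ) (hy : ApproxTriples ξ y) :
    ∃ i₁, 1 ≤ i₁ ∧ ∀ i, i₁ ≤ i →
      det3 (y i) (y (i + 1)) (brkt (y (i + 3)) (y (i + 4))) = 0 ∧
      det3 (y (i + 1)) (y (i + 2)) (brkt (y (i + 3)) (y (i + 4))) = 0 := by
  obtain ⟨hnz, hub, c, hc, hrel⟩ := hy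
  clear hξ
  have hc0 : (0:ℝ) < c := lt_of_lt_of_le one_pos hc
  have hQ1 : (1:ℝ) ≤ 1 + |ξ| := le_add_of_nonneg_right (abs_nonneg ξ)
  have hQ0 : (0:ℝ) ≤ 1 + |ξ| := by linarith
  set K : ℝ := 72 * (1 + |ξ|) * c ^ 80 with hKdef
  have hK0 : 0 < K := by positivity
  set T : ℝ := max ((K + 1) ^ 3) (c ^ 2) with hTdef
  have hT1 : (1:ℝ) ≤ T := by
    have h1 : ((1:ℝ)) ^ 3 ≤ (K + 1) ^ 3 := pow_le_pow_left₀ (by norm_num) (by linarith) 3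
    rw [one_pow] at h1
    exact h1.trans (le_max_left _ _)
  obtain ⟨i₀, hi₀1, hi₀T⟩ := hub T
  have hX1 : ∀ j, 1 ≤ j → 1 ≤ nrm (y j) := fun j hj => one_le_nrm (hnz j hj).1
  have hpow : ∀ n m : ℕ, n ≤ m → c ^ n ≤ c ^ m := fun n m h => pow_le_pow_right₀ hc h
  -- largeness of the sequence beyond i₀
  have key : ∀ k : ℕ, T ≤ nrm (y (i₀ + k)) := by
    intro k
    induction k with
    | zero => exact hi₀T.le
    | succ n ih =>
      have h1 : 1 ≤ i₀ + n := le_trans hi₀1 (Nat.le_add_right _ _)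
      set X := nrm (y (i₀ + n)) with hXdef
      have hX : 1 ≤ X := hT1.trans ih
      have hX0 : (0:ℝ) < X := lt_of_lt_of_le one_pos hX
      have hTc : c ^ 2 ≤ X := le_trans (le_max_right _ _) ih
      have hstep := (hrel (i₀ + n) h1).1
      have e1 : X ^ (1.61:ℝ) ≤ X ^ golden := Real.rpow_le_rpow_of_exponent_le hX golden_lb
      have e2 : c ≤ X ^ (0.61:ℝ) := by
        calc c = c ^ (1:ℝ) := (Real.rpow_one c).symm
          _ ≤ c ^ (1.22:ℝ) := Real.rpow_le_rpow_of_exponent_le hc (by norm_num)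
          _ = (c ^ 2) ^ (0.61:ℝ) := by
              rw [← Real.rpow_natCast c 2, ← Real.rpow_mul hc0.le]; norm_num
          _ ≤ X ^ (0.61:ℝ) := Real.rpow_le_rpow (by positivity) hTc (by norm_num)
      have e3 : X ^ (1.61:ℝ) = X * X ^ (0.61:ℝ) := by
        rw [show (1.61:ℝ) = 1 + 0.61 by norm_num, Real.rpow_add hX0, Real.rpow_one]
      have hmono : X ≤ nrm (y (i₀ + n + 1)) := by
        have c1 : c * X ≤ X ^ (0.61:ℝ) * X := mul_le_mul_of_nonneg_right e2 hX0.le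
        calc X = c⁻¹ * (c * X) := by field_simp
          _ ≤ c⁻¹ * (X ^ (0.61:ℝ) * X) := mul_le_mul_of_nonneg_left c1 (by positivity)
          _ = c⁻¹ * X ^ (1.61:ℝ) := by rw [e3]; ring
          _ ≤ c⁻¹ * X ^ golden := mul_le_mul_of_nonneg_left e1 (by positivity)
          _ ≤ nrm (y (i₀ + n + 1)) := hstep
      exact ih.trans hmono
  have hlarge : ∀ j, i₀ ≤ j → T ≤ nrm (y j) := by
    intro j hj
    obtain ⟨k, rfl⟩ := Nat.exists_eq_add_of_le hj
    exact key k
  refine ⟨i₀, hi₀1, fun i hi => ?_⟩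
  have h1i : 1 ≤ i := le_trans hi₀1 hi
  -- 1 ≤ each norm
  have hA1 : 1 ≤ nrm (y i) := hT1.trans (hlarge i hi)
  have hB1 : 1 ≤ nrm (y (i+1)) := hT1.trans (hlarge _ (by omega))
  have hC1 : 1 ≤ nrm (y (i+2)) := hT1.trans (hlarge _ (by omega))
  have hD1 : 1 ≤ nrm (y (i+3)) := hT1.trans (hlarge _ (by omega))
  have hE1 : 1 ≤ nrm (y (i+4)) := hT1.trans (hlarge _ (by omega))
  have hA0 : (0:ℝ) < nrm (y i) := lt_of_lt_of_le one_pos hA1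
  have hB0 : (0:ℝ) < nrm (y (i+1)) := lt_of_lt_of_le one_pos hB1
  have hC0 : (0:ℝ) < nrm (y (i+2)) := lt_of_lt_of_le one_pos hC1
  have hD0 : (0:ℝ) < nrm (y (i+3)) := lt_of_lt_of_le one_pos hD1
  have hE0 : (0:ℝ) < nrm (y (i+4)) := lt_of_lt_of_le one_pos hE1
  have R0 := hrel i h1i
  have R1 := hrel (i+1) (by omega)
  have R2 := hrel (i+2) (by omega)
  have R3 := hrel (i+3) (by omega)
  have R4 := hrel (i+4) (by omega)
  -- base growth bounds in rigid form
  have hBub : nrm (y (i+1)) ≤ c * nrm (y i) ^ (1.62:ℝ) :=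
    R0.2.1.trans (mul_le_mul_of_nonneg_left
      (Real.rpow_le_rpow_of_exponent_le hA1 golden_ub) hc0.le)
  have hBlo : c⁻¹ * nrm (y i) ^ (1.61:ℝ) ≤ nrm (y (i+1)) :=
    le_trans (mul_le_mul_of_nonneg_left
      (Real.rpow_le_rpow_of_exponent_le hA1 golden_lb) (by positivity)) R0.1
  -- chains upward
  have hCub : nrm (y (i+2)) ≤ c * c ^ 2 * nrm (y i) ^ (2.63:ℝ) :=
    chain_up hc hc hA1 hB0.le hBub R1.2.1 (by norm_num) (by norm_num)
  have hd3 : (1:ℝ) ≤ c * c ^ 2 := by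
    rw [show c * c ^ 2 = c ^ 3 from by ring]
    simpa using hpow 0 3 (by norm_num)
  have hDub : nrm (y (i+3)) ≤ c * (c * c ^ 2) ^ 2 * nrm (y i) ^ (4.27:ℝ) :=
    chain_up hc hd3 hA1 hC0.le hCub R2.2.1 (by norm_num) (by norm_num)
  have hd7 : (1:ℝ) ≤ c * (c * c ^ 2) ^ 2 := by
    rw [show c * (c * c ^ 2) ^ 2 = c ^ 7 from by ring]
    simpa using hpow 0 7 (by norm_num)
  have hEub : nrm (y (i+4)) ≤ c * (c * (c * c ^ 2) ^ 2) ^ 2 * nrm (y i) ^ (6.92:ℝ) :=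
    chain_up hc hd7 hA1 hD0.le hDub R3.2.1 (by norm_num) (by norm_num)
  -- chains downward
  have hClo : (c * c ^ 2)⁻¹ * nrm (y i) ^ (2.59:ℝ) ≤ nrm (y (i+2)) :=
    chain_lo hc hc hA1 hB1 hBlo R1.1 (by norm_num) (by norm_num)
  have hDlo : (c * (c * c ^ 2) ^ 2)⁻¹ * nrm (y i) ^ (4.16:ℝ) ≤ nrm (y (i+3)) :=
    chain_lo hc hd3 hA1 hC1 hClo R2.1 (by norm_num) (by norm_num)
  have hElo : (c * (c * (c * c ^ 2) ^ 2) ^ 2)⁻¹ * nrm (y i) ^ (6.69:ℝ) ≤ nrm (y (i+4)) :=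
    chain_lo hc hd7 hA1 hD1 hDlo R3.1 (by norm_num) (by norm_num)
  -- inverses
  have hBinv : (nrm (y (i+1)))⁻¹ ≤ c * nrm (y i) ^ (-(1.61:ℝ)) :=
    inv_bound hA0 hB0 hc0 hBlo
  have hCinv : (nrm (y (i+2)))⁻¹ ≤ (c * c ^ 2) * nrm (y i) ^ (-(2.59:ℝ)) :=
    inv_bound hA0 hC0 (by positivity) hClo
  have hDinv : (nrm (y (i+3)))⁻¹ ≤ (c * (c * c ^ 2) ^ 2) * nrm (y i) ^ (-(4.16:ℝ)) :=
    inv_bound hA0 hD0 (by positivity) hDlo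
  have hEinv : (nrm (y (i+4)))⁻¹ ≤ (c * (c * (c * c ^ 2) ^ 2) ^ 2) * nrm (y i) ^ (-(6.69:ℝ)) :=
    inv_bound hA0 hE0 (by positivity) hElo
  -- uniform upper bounds with constant c^16
  have hA16 : nrm (y i) ≤ c ^ 16 * nrm (y i) ^ (1:ℝ) := by
    rw [Real.rpow_one]
    have h16 : (1:ℝ) ≤ c ^ 16 := by simpa using hpow 0 16 (by norm_num)
    exact le_mul_of_one_le_left hA0.le h16
  have hB16 : nrm (y (i+1)) ≤ c ^ 16 * nrm (y i) ^ (1.62:ℝ) :=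
    relax_const hBub (by calc c = c ^ 1 := (pow_one c).symm
      _ ≤ c ^ 16 := hpow 1 16 (by norm_num)) hA0.le
  have hC16 : nrm (y (i+2)) ≤ c ^ 16 * nrm (y i) ^ (2.63:ℝ) :=
    relax_const hCub (by calc c * c ^ 2 = c ^ 3 := by ring
      _ ≤ c ^ 16 := hpow 3 16 (by norm_num)) hA0.le
  have hD16 : nrm (y (i+3)) ≤ c ^ 16 * nrm (y i) ^ (4.27:ℝ) :=
    relax_const hDub (by calc c * (c * c ^ 2) ^ 2 = c ^ 7 := by ring
      _ ≤ c ^ 16 := hpow 7 16 (by norm_num)) hA0.le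
  have hE16 : nrm (y (i+4)) ≤ c ^ 16 * nrm (y i) ^ (6.92:ℝ) :=
    relax_const hEub (by calc c * (c * (c * c ^ 2) ^ 2) ^ 2 = c ^ 15 := by ring
      _ ≤ c ^ 16 := hpow 15 16 (by norm_num)) hA0.le
  -- uniform L-bounds
  have hLa16 : Lxi ξ (y i) ≤ c ^ 16 * nrm (y i) ^ (-(1:ℝ)) := by
    have h := R0.2.2.2.1
    rw [← Real.rpow_neg_one (nrm (y i))] at h
    exact relax_const h (by calc c = c ^ 1 := (pow_one c).symm
      _ ≤ c ^ 16 := hpow 1 16 (by norm_num)) hA0.le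
  have hLb16 : Lxi ξ (y (i+1)) ≤ c ^ 16 * nrm (y i) ^ (-(1.61:ℝ)) := by
    have h : Lxi ξ (y (i+1)) ≤ c * c * nrm (y i) ^ (-(1.61:ℝ)) := by
      calc Lxi ξ (y (i+1)) ≤ c * (nrm (y (i+1)))⁻¹ := R1.2.2.2.1
        _ ≤ c * (c * nrm (y i) ^ (-(1.61:ℝ))) := mul_le_mul_of_nonneg_left hBinv hc0.le
        _ = c * c * nrm (y i) ^ (-(1.61:ℝ)) := by ring
    exact relax_const h (by calc c * c = c ^ 2 := by ring
      _ ≤ c ^ 16 := hpow 2 16 (by norm_num)) hA0.le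
  have hLc16 : Lxi ξ (y (i+2)) ≤ c ^ 16 * nrm (y i) ^ (-(2.59:ℝ)) := by
    have h : Lxi ξ (y (i+2)) ≤ c * (c * c ^ 2) * nrm (y i) ^ (-(2.59:ℝ)) := by
      calc Lxi ξ (y (i+2)) ≤ c * (nrm (y (i+2)))⁻¹ := R2.2.2.2.1
        _ ≤ c * ((c * c ^ 2) * nrm (y i) ^ (-(2.59:ℝ))) := mul_le_mul_of_nonneg_left hCinv hc0.le
        _ = c * (c * c ^ 2) * nrm (y i) ^ (-(2.59:ℝ)) := by ring
    exact relax_const h (by calc c * (c * c ^ 2) = c ^ 4 := by ring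
      _ ≤ c ^ 16 := hpow 4 16 (by norm_num)) hA0.le
  have hLd16 : Lxi ξ (y (i+3)) ≤ c ^ 16 * nrm (y i) ^ (-(4.16:ℝ)) := by
    have h : Lxi ξ (y (i+3)) ≤ c * (c * (c * c ^ 2) ^ 2) * nrm (y i) ^ (-(4.16:ℝ)) := by
      calc Lxi ξ (y (i+3)) ≤ c * (nrm (y (i+3)))⁻¹ := R3.2.2.2.1
        _ ≤ c * ((c * (c * c ^ 2) ^ 2) * nrm (y i) ^ (-(4.16:ℝ))) :=
            mul_le_mul_of_nonneg_left hDinv hc0.le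
        _ = c * (c * (c * c ^ 2) ^ 2) * nrm (y i) ^ (-(4.16:ℝ)) := by ring
    exact relax_const h (by calc c * (c * (c * c ^ 2) ^ 2) = c ^ 8 := by ring
      _ ≤ c ^ 16 := hpow 8 16 (by norm_num)) hA0.le
  have hLe16 : Lxi ξ (y (i+4)) ≤ c ^ 16 * nrm (y i) ^ (-(6.69:ℝ)) := by
    have h : Lxi ξ (y (i+4)) ≤ c * (c * (c * (c * c ^ 2) ^ 2) ^ 2) * nrm (y i) ^ (-(6.69:ℝ)) := by
      calc Lxi ξ (y (i+4)) ≤ c * (nrm (y (i+4)))⁻¹ := R4.2.2.2.1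
        _ ≤ c * ((c * (c * (c * c ^ 2) ^ 2) ^ 2) * nrm (y i) ^ (-(6.69:ℝ))) :=
            mul_le_mul_of_nonneg_left hEinv hc0.le
        _ = c * (c * (c * (c * c ^ 2) ^ 2) ^ 2) * nrm (y i) ^ (-(6.69:ℝ)) := by ring
    exact relax_const h (by calc c * (c * (c * (c * c ^ 2) ^ 2) ^ 2) = c ^ 16 := by ring
      _ ≤ c ^ 16 := le_refl _) hA0.le
  -- the bracket point
  set w := brkt (y (i+3)) (y (i+4)) with hwdef
  have hDnn : (0:ℝ) ≤ nrm (y (i+3)) := hD0.le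
  have hEnn : (0:ℝ) ≤ nrm (y (i+4)) := hE0.le
  have hLdnn : (0:ℝ) ≤ Lxi ξ (y (i+3)) := Lxi_nonneg _ _
  have hLenn : (0:ℝ) ≤ Lxi ξ (y (i+4)) := Lxi_nonneg _ _
  have hc16nn : (0:ℝ) ≤ c ^ 16 := by positivity
  -- bounds on the three monomials (upper exponent 1.85 for w0, -1.4 for L)
  have N1a : nrm (y (i+4)) * (Lxi ξ (y (i+3)) * Lxi ξ (y (i+3)))
      ≤ c ^ 16 * (c ^ 16 * c ^ 16) * nrm (y i) ^ (1.85:ℝ) :=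
    tri_bound hA1 hEnn hLdnn hLdnn hc16nn hc16nn hc16nn hE16 hLd16 hLd16 (by norm_num)
  have N2a : nrm (y (i+3)) * (Lxi ξ (y (i+3)) * Lxi ξ (y (i+4)))
      ≤ c ^ 16 * (c ^ 16 * c ^ 16) * nrm (y i) ^ (1.85:ℝ) :=
    tri_bound hA1 hDnn hLdnn hLenn hc16nn hc16nn hc16nn hD16 hLd16 hLe16 (by norm_num)
  have N3a : nrm (y (i+3)) * (nrm (y (i+3)) * Lxi ξ (y (i+4)))
      ≤ c ^ 16 * (c ^ 16 * c ^ 16) * nrm (y i) ^ (1.85:ℝ) :=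
    tri_bound hA1 hDnn hDnn hLenn hc16nn hc16nn hc16nn hD16 hD16 hLe16 (by norm_num)
  have N1b : nrm (y (i+4)) * (Lxi ξ (y (i+3)) * Lxi ξ (y (i+3)))
      ≤ c ^ 16 * (c ^ 16 * c ^ 16) * nrm (y i) ^ (-(1.4:ℝ)) :=
    tri_bound hA1 hEnn hLdnn hLdnn hc16nn hc16nn hc16nn hE16 hLd16 hLd16 (by norm_num)
  have N2b : Lxi ξ (y (i+3)) * (Lxi ξ (y (i+3)) * Lxi ξ (y (i+4)))
      ≤ c ^ 16 * (c ^ 16 * c ^ 16) * nrm (y i) ^ (-(1.4:ℝ)) :=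
    tri_bound hA1 hLdnn hLdnn hLenn hc16nn hc16nn hc16nn hLd16 hLd16 hLe16 (by norm_num)
  have N3b : nrm (y (i+3)) * (Lxi ξ (y (i+3)) * Lxi ξ (y (i+4)))
      ≤ c ^ 16 * (c ^ 16 * c ^ 16) * nrm (y i) ^ (-(1.4:ℝ)) :=
    tri_bound hA1 hDnn hLdnn hLenn hc16nn hc16nn hc16nn hD16 hLd16 hLe16 (by norm_num)
  have hW0 : |((w).1 : ℝ)| ≤ 12 * (1 + |ξ|) * c ^ 48 * nrm (y i) ^ (1.85:ℝ) := by
    calc |((w).1 : ℝ)| ≤ 4 * (1 + |ξ|) *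
        (nrm (y (i+4)) * (Lxi ξ (y (i+3)) * Lxi ξ (y (i+3)))
          + nrm (y (i+3)) * (Lxi ξ (y (i+3)) * Lxi ξ (y (i+4)))
          + nrm (y (i+3)) * (nrm (y (i+3)) * Lxi ξ (y (i+4)))) :=
        brkt_w0_bound ξ (y (i+3)) (y (i+4))
      _ ≤ 4 * (1 + |ξ|) * (c ^ 16 * (c ^ 16 * c ^ 16) * nrm (y i) ^ (1.85:ℝ)
          + c ^ 16 * (c ^ 16 * c ^ 16) * nrm (y i) ^ (1.85:ℝ)
          + c ^ 16 * (c ^ 16 * c ^ 16) * nrm (y i) ^ (1.85:ℝ)) := by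
        refine mul_le_mul_of_nonneg_left ?_ (by positivity)
        exact add_le_add (add_le_add N1a N2a) N3a
      _ = 12 * (1 + |ξ|) * c ^ 48 * nrm (y i) ^ (1.85:ℝ) := by ring
  have hLw : Lxi ξ w ≤ 12 * (1 + |ξ|) * c ^ 48 * nrm (y i) ^ (-(1.4:ℝ)) := by
    calc Lxi ξ w ≤ 4 * (1 + |ξ|) *
        (nrm (y (i+4)) * (Lxi ξ (y (i+3)) * Lxi ξ (y (i+3)))
          + Lxi ξ (y (i+3)) * (Lxi ξ (y (i+3)) * Lxi ξ (y (i+4)))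
          + nrm (y (i+3)) * (Lxi ξ (y (i+3)) * Lxi ξ (y (i+4)))) :=
        brkt_L_bound ξ (y (i+3)) (y (i+4))
      _ ≤ 4 * (1 + |ξ|) * (c ^ 16 * (c ^ 16 * c ^ 16) * nrm (y i) ^ (-(1.4:ℝ))
          + c ^ 16 * (c ^ 16 * c ^ 16) * nrm (y i) ^ (-(1.4:ℝ))
          + c ^ 16 * (c ^ 16 * c ^ 16) * nrm (y i) ^ (-(1.4:ℝ))) := by
        refine mul_le_mul_of_nonneg_left ?_ (by positivity)
        exact add_le_add (add_le_add N1b N2b) N3b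
      _ = 12 * (1 + |ξ|) * c ^ 48 * nrm (y i) ^ (-(1.4:ℝ)) := by ring
  have hWnn : (0:ℝ) ≤ |((w).1 : ℝ)| := abs_nonneg _
  have hLwnn : (0:ℝ) ≤ Lxi ξ w := Lxi_nonneg _ _
  have hAnn : (0:ℝ) ≤ nrm (y i) := hA0.le
  have hBnn : (0:ℝ) ≤ nrm (y (i+1)) := hB0.le
  have hCnn : (0:ℝ) ≤ nrm (y (i+2)) := hC0.le
  have hLann : (0:ℝ) ≤ Lxi ξ (y i) := Lxi_nonneg _ _
  have hLbnn : (0:ℝ) ≤ Lxi ξ (y (i+1)) := Lxi_nonneg _ _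
  have hLcnn : (0:ℝ) ≤ Lxi ξ (y (i+2)) := Lxi_nonneg _ _
  have h12nn : (0:ℝ) ≤ 12 * (1 + |ξ|) * c ^ 48 := by positivity
  -- final smallness
  have hfin : K * nrm (y i) ^ (-(0.38:ℝ)) < 1 := by
    have h3 : (K + 1) ^ 3 ≤ nrm (y i) := le_trans (le_max_left _ _) (hlarge i hi)
    have hKA : K + 1 ≤ nrm (y i) ^ ((1:ℝ)/3) := by
      calc K + 1 = ((K + 1) ^ 3) ^ ((1:ℝ)/3) := by
            rw [← Real.rpow_natCast (K+1) 3, ← Real.rpow_mul (by positivity)]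
            norm_num
        _ ≤ nrm (y i) ^ ((1:ℝ)/3) := Real.rpow_le_rpow (by positivity) h3 (by norm_num)
    have h38 : nrm (y i) ^ ((1:ℝ)/3) ≤ nrm (y i) ^ (0.38:ℝ) :=
      Real.rpow_le_rpow_of_exponent_le hA1 (by norm_num)
    have hKlt : K < nrm (y i) ^ (0.38:ℝ) := lt_of_lt_of_le (lt_add_one K) (hKA.trans h38)
    have e : K * nrm (y i) ^ (-(0.38:ℝ)) = K / nrm (y i) ^ (0.38:ℝ) := by
      rw [Real.rpow_neg hA0.le, div_eq_mul_inv]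
    rw [e]
    exact (div_lt_one (by positivity)).mpr hKlt
  constructor
  · -- det3 (y i) (y (i+1)) w = 0
    have U1 : nrm (y i) * (Lxi ξ (y (i+1)) * Lxi ξ w)
        ≤ c ^ 16 * (c ^ 16 * (12 * (1 + |ξ|) * c ^ 48)) * nrm (y i) ^ (-(0.38:ℝ)) :=
      tri_bound hA1 hAnn hLbnn hLwnn hc16nn hc16nn h12nn hA16 hLb16 hLw (by norm_num)
    have U2 : nrm (y (i+1)) * (Lxi ξ (y i) * Lxi ξ w)
        ≤ c ^ 16 * (c ^ 16 * (12 * (1 + |ξ|) * c ^ 48)) * nrm (y i) ^ (-(0.38:ℝ)) :=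
      tri_bound hA1 hBnn hLann hLwnn hc16nn hc16nn h12nn hB16 hLa16 hLw (by norm_num)
    have U3 : |((w).1 : ℝ)| * (Lxi ξ (y i) * Lxi ξ (y (i+1)))
        ≤ 12 * (1 + |ξ|) * c ^ 48 * (c ^ 16 * c ^ 16) * nrm (y i) ^ (-(0.38:ℝ)) :=
      tri_bound hA1 hWnn hLann hLbnn h12nn hc16nn hc16nn hW0 hLa16 hLb16 (by norm_num)
    have hdet : |(det3 (y i) (y (i+1)) w : ℝ)| ≤ K * nrm (y i) ^ (-(0.38:ℝ)) := by
      calc |(det3 (y i) (y (i+1)) w : ℝ)|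
          ≤ 2 * (nrm (y i) * (Lxi ξ (y (i+1)) * Lxi ξ w)
            + nrm (y (i+1)) * (Lxi ξ (y i) * Lxi ξ w)
            + |((w).1 : ℝ)| * (Lxi ξ (y i) * Lxi ξ (y (i+1)))) :=
          det3_bound ξ (y i) (y (i+1)) w
        _ ≤ 2 * (c ^ 16 * (c ^ 16 * (12 * (1 + |ξ|) * c ^ 48)) * nrm (y i) ^ (-(0.38:ℝ))
            + c ^ 16 * (c ^ 16 * (12 * (1 + |ξ|) * c ^ 48)) * nrm (y i) ^ (-(0.38:ℝ))
            + 12 * (1 + |ξ|) * c ^ 48 * (c ^ 16 * c ^ 16) * nrm (y i) ^ (-(0.38:ℝ))) := by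
          have := add_le_add (add_le_add U1 U2) U3
          linarith
        _ = K * nrm (y i) ^ (-(0.38:ℝ)) := by rw [hKdef]; ring
    exact int_abs_lt_one (lt_of_le_of_lt hdet hfin)
  · -- det3 (y (i+1)) (y (i+2)) w = 0
    have U1 : nrm (y (i+1)) * (Lxi ξ (y (i+2)) * Lxi ξ w)
        ≤ c ^ 16 * (c ^ 16 * (12 * (1 + |ξ|) * c ^ 48)) * nrm (y i) ^ (-(0.38:ℝ)) :=
      tri_bound hA1 hBnn hLcnn hLwnn hc16nn hc16nn h12nn hB16 hLc16 hLw (by norm_num)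
    have U2 : nrm (y (i+2)) * (Lxi ξ (y (i+1)) * Lxi ξ w)
        ≤ c ^ 16 * (c ^ 16 * (12 * (1 + |ξ|) * c ^ 48)) * nrm (y i) ^ (-(0.38:ℝ)) :=
      tri_bound hA1 hCnn hLbnn hLwnn hc16nn hc16nn h12nn hC16 hLb16 hLw (by norm_num)
    have U3 : |((w).1 : ℝ)| * (Lxi ξ (y (i+1)) * Lxi ξ (y (i+2)))
        ≤ 12 * (1 + |ξ|) * c ^ 48 * (c ^ 16 * c ^ 16) * nrm (y i) ^ (-(0.38:ℝ)) :=
      tri_bound hA1 hWnn hLbnn hLcnn h12nn hc16nn hc16nn hW0 hLb16 hLc16 (by norm_num)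
    have hdet : |(det3 (y (i+1)) (y (i+2)) w : ℝ)| ≤ K * nrm (y i) ^ (-(0.38:ℝ)) := by
      calc |(det3 (y (i+1)) (y (i+2)) w : ℝ)|
          ≤ 2 * (nrm (y (i+1)) * (Lxi ξ (y (i+2)) * Lxi ξ w)
            + nrm (y (i+2)) * (Lxi ξ (y (i+1)) * Lxi ξ w)
            + |((w).1 : ℝ)| * (Lxi ξ (y (i+1)) * Lxi ξ (y (i+2)))) :=
          det3_bound ξ (y (i+1)) (y (i+2)) w
        _ ≤ 2 * (c ^ 16 * (c ^ 16 * (12 * (1 + |ξ|) * c ^ 48)) * nrm (y i) ^ (-(0.38:ℝ))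
            + c ^ 16 * (c ^ 16 * (12 * (1 + |ξ|) * c ^ 48)) * nrm (y i) ^ (-(0.38:ℝ))
            + 12 * (1 + |ξ|) * c ^ 48 * (c ^ 16 * c ^ 16) * nrm (y i) ^ (-(0.38:ℝ))) := by
          have := add_le_add (add_le_add U1 U2) U3
          linarith
        _ = K * nrm (y i) ^ (-(0.38:ℝ)) := by rw [hKdef]; ring
    exact int_abs_lt_one (lt_of_le_of_lt hdet hfin)
end

section
/- Let ξ be a real number and let P = p₀ + p₁T + p₂T² and Q = q₀ + q₁T + q₂T² be polynomials with integer coefficients such that 2H(P)|Q(ξ)| ≤ H(Q)|P(ξ)|. Then the point x = P ∧ Q = (p₂q₁ − p₁q₂, p₀q₂ − p₂q₀, p₁q₀ − p₀q₁) ∈ ℤ³ satisfies (2·max{1, |ξ| + ξ²})⁻¹·H(Q)|P(ξ)| ≤ L_ξ(x) ≤ (3/2)·H(Q)|P(ξ)|. -/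
open Polynomial Matrix

/-- Value at ξ of the quadratic polynomial q₀ + q₁T + q₂T² with coefficient vector q ∈ ℤ³. -/
noncomputable def polyVal (ξ : ℝ) (q : ℤ × ℤ × ℤ) : ℝ :=
  (q.1 : ℝ) + (q.2.1 : ℝ) * ξ + (q.2.2 : ℝ) * ξ ^ 2

/-- Lemma on the point P ∧ Q built from two quadratic polynomials. -/
theorem stmt14 (ξ : ℝ) (p q : ℤ × ℤ × ℤ)
    (h : 2 * nrm p * |polyVal ξ q| ≤ nrm q * |polyVal ξ p|) :
    (2 * max 1 (|ξ| + ξ ^ 2))⁻¹ * (nrm q * |polyVal ξ p|) ≤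
      Lxi ξ (p.2.2 * q.2.1 - p.2.1 * q.2.2,
             p.1 * q.2.2 - p.2.2 * q.1,
             p.2.1 * q.1 - p.1 * q.2.1) ∧
    Lxi ξ (p.2.2 * q.2.1 - p.2.1 * q.2.2,
           p.1 * q.2.2 - p.2.2 * q.1,
           p.2.1 * q.1 - p.1 * q.2.1) ≤ (3 / 2) * (nrm q * |polyVal ξ p|) := by
  obtain ⟨p0, p1, p2⟩ := p
  obtain ⟨q0, q1, q2⟩ := q
  simp only [nrm, polyVal, Lxi] at h ⊢
  push_cast at h ⊢
  set P : ℝ := (p0:ℝ) + (p1:ℝ) * ξ + (p2:ℝ) * ξ ^ 2 with hPdef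
  set Q : ℝ := (q0:ℝ) + (q1:ℝ) * ξ + (q2:ℝ) * ξ ^ 2 with hQdef
  set Np : ℝ := max |(p0:ℝ)| (max |(p1:ℝ)| |(p2:ℝ)|) with hNp
  set Nq : ℝ := max |(q0:ℝ)| (max |(q1:ℝ)| |(q2:ℝ)|) with hNq
  set M : ℝ := max 1 (|ξ| + ξ ^ 2) with hM
  have e1 : (p0:ℝ) * q2 - p2 * q0 - ξ * ((p2:ℝ) * q1 - p1 * q2) = q2 * P - p2 * Q := by
    rw [hPdef, hQdef]; ring
  have e2 : (p1:ℝ) * q0 - p0 * q1 - ξ ^ 2 * ((p2:ℝ) * q1 - p1 * q2) = p1 * Q - q1 * P := by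
    rw [hPdef, hQdef]; ring
  rw [e1, e2]
  set L : ℝ := max |q2 * P - p2 * Q| |p1 * Q - q1 * P| with hLdef
  have hq0 : |(q0:ℝ)| ≤ Nq := le_max_left _ _
  have hq1 : |(q1:ℝ)| ≤ Nq := le_trans (le_max_left _ _) (le_max_right _ _)
  have hq2 : |(q2:ℝ)| ≤ Nq := le_trans (le_max_right _ _) (le_max_right _ _)
  have hp0 : |(p0:ℝ)| ≤ Np := le_max_left _ _
  have hp1 : |(p1:ℝ)| ≤ Np := le_trans (le_max_left _ _) (le_max_right _ _)
  have hp2 : |(p2:ℝ)| ≤ Np := le_trans (le_max_right _ _) (le_max_right _ _)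
  have hPn : (0:ℝ) ≤ |P| := abs_nonneg _
  have hQn : (0:ℝ) ≤ |Q| := abs_nonneg _
  have hNqn : (0:ℝ) ≤ Nq := le_trans (abs_nonneg _) hq0
  have hNpn : (0:ℝ) ≤ Np := le_trans (abs_nonneg _) hp0
  have hM1 : (1:ℝ) ≤ M := le_max_left _ _
  have hMpos : (0:ℝ) < M := lt_of_lt_of_le one_pos hM1
  have hL0 : (0:ℝ) ≤ L := le_trans (abs_nonneg _) (le_max_left _ _)
  have hhalf : Np * |Q| ≤ 1 / 2 * (Nq * |P|) := by nlinarith [h]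
  have mq1 : |(q1:ℝ)| * |P| ≤ Nq * |P| := mul_le_mul_of_nonneg_right hq1 hPn
  have mq2 : |(q2:ℝ)| * |P| ≤ Nq * |P| := mul_le_mul_of_nonneg_right hq2 hPn
  have mp0 : |(p0:ℝ)| * |Q| ≤ Np * |Q| := mul_le_mul_of_nonneg_right hp0 hQn
  have mp1 : |(p1:ℝ)| * |Q| ≤ Np * |Q| := mul_le_mul_of_nonneg_right hp1 hQn
  have mp2 : |(p2:ℝ)| * |Q| ≤ Np * |Q| := mul_le_mul_of_nonneg_right hp2 hQn
  have u2 : |q2 * P - p2 * Q| ≤ |(q2:ℝ)| * |P| + |(p2:ℝ)| * |Q| := by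
    rw [← abs_mul, ← abs_mul]; exact abs_sub _ _
  have u1 : |p1 * Q - q1 * P| ≤ |(q1:ℝ)| * |P| + |(p1:ℝ)| * |Q| := by
    rw [← abs_mul, ← abs_mul]; rw [abs_sub_comm]; exact abs_sub _ _
  have l2 : |(q2:ℝ)| * |P| - |(p2:ℝ)| * |Q| ≤ |q2 * P - p2 * Q| := by
    rw [← abs_mul, ← abs_mul]; exact abs_sub_abs_le_abs_sub _ _
  have l1 : |(q1:ℝ)| * |P| - |(p1:ℝ)| * |Q| ≤ |p1 * Q - q1 * P| := by
    rw [← abs_mul, ← abs_mul, abs_sub_comm]; exact abs_sub_abs_le_abs_sub _ _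
  have l0 : |(q0:ℝ)| * |P| - |(p0:ℝ)| * |Q| ≤ |q0 * P - p0 * Q| := by
    rw [← abs_mul, ← abs_mul]; exact abs_sub_abs_le_abs_sub _ _
  have t2 : |q2 * P - p2 * Q| ≤ L := le_max_left _ _
  have t1 : |p1 * Q - q1 * P| ≤ L := le_max_right _ _
  have key : 1 / 2 * (Nq * |P|) ≤ M * L := by
    have hc : Nq = |(q0:ℝ)| ∨ Nq = max |(q1:ℝ)| |(q2:ℝ)| :=
      max_choice |(q0:ℝ)| (max |(q1:ℝ)| |(q2:ℝ)|)
    rcases hc with hc0 | hc12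
    · -- hard case: nrm attained at q0
      have e0 : (q0:ℝ) * P - p0 * Q = ξ * (p1 * Q - q1 * P) - ξ ^ 2 * (q2 * P - p2 * Q) := by
        rw [hPdef, hQdef]; ring
      have t3 : |(q0:ℝ) * P - p0 * Q| ≤ |ξ| * L + ξ ^ 2 * L := by
        rw [e0]
        calc |ξ * (p1 * Q - q1 * P) - ξ ^ 2 * (q2 * P - p2 * Q)|
            ≤ |ξ * (p1 * Q - q1 * P)| + |ξ ^ 2 * (q2 * P - p2 * Q)| := abs_sub _ _
          _ = |ξ| * |p1 * Q - q1 * P| + ξ ^ 2 * |q2 * P - p2 * Q| := by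
              rw [abs_mul, abs_mul, abs_of_nonneg (sq_nonneg ξ)]
          _ ≤ |ξ| * L + ξ ^ 2 * L :=
              add_le_add (mul_le_mul_of_nonneg_left t1 (abs_nonneg ξ))
                (mul_le_mul_of_nonneg_left t2 (sq_nonneg ξ))
      have hcc : Nq * |P| = |(q0:ℝ)| * |P| := by rw [hc0]
      have hxiM : |ξ| + ξ ^ 2 ≤ M := le_max_right _ _
      have hML : (|ξ| + ξ ^ 2) * L ≤ M * L := mul_le_mul_of_nonneg_right hxiM hL0
      have hring : (|ξ| + ξ ^ 2) * L = |ξ| * L + ξ ^ 2 * L := by ring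
      linarith
    · have hLM : L ≤ M * L := le_mul_of_one_le_left hL0 hM1
      rcases max_choice |(q1:ℝ)| |(q2:ℝ)| with hc1 | hc2
      · have hcc : Nq * |P| = |(q1:ℝ)| * |P| := by rw [hc12, hc1]
        linarith
      · have hcc : Nq * |P| = |(q2:ℝ)| * |P| := by rw [hc12, hc2]
        linarith
  constructor
  · rw [inv_mul_le_iff₀ (by positivity : (0:ℝ) < 2 * M)]
    have hr : 2 * M * L = 2 * (M * L) := by ring
    linarith
  · apply max_le <;> linarith
end

section
/- For every real number ξ and every point x = (x₀, x₁, x₂) ∈ ℝ³, one has |x₀x₂ − x₁²| ≤ (2 + |ξ|)·‖x‖·L_ξ(x). -/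
/-- Norm of a point of ℝ³: max of absolute values of coordinates. -/
noncomputable def nrmR (x : ℝ × ℝ × ℝ) : ℝ := max |x.1| (max |x.2.1| |x.2.2|)

/-- L_ξ(x) = max(|x₁ − ξx₀|, |x₂ − ξ²x₀|). -/
noncomputable def LxiR (ξ : ℝ) (x : ℝ × ℝ × ℝ) : ℝ :=
  max |x.2.1 - ξ * x.1| |x.2.2 - ξ ^ 2 * x.1|

/-- Bound for the 2×2 determinant x₀x₂ − x₁². -/
theorem stmt18 (ξ : ℝ) (x : ℝ × ℝ × ℝ) :
    |x.1 * x.2.2 - x.2.1 ^ 2| ≤ (2 + |ξ|) * nrmR x * LxiR ξ x := by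
  obtain ⟨a, b, c⟩ := x
  simp only [nrmR, LxiR]
  have hN0 : |a| ≤ max |a| (max |b| |c|) := le_max_left _ _
  have hN1 : |b| ≤ max |a| (max |b| |c|) := le_trans (le_max_left _ _) (le_max_right _ _)
  have hL1 : |b - ξ * a| ≤ max |b - ξ * a| |c - ξ ^ 2 * a| := le_max_left _ _
  have hL2 : |c - ξ ^ 2 * a| ≤ max |b - ξ * a| |c - ξ ^ 2 * a| := le_max_right _ _
  have key : a * c - b ^ 2 = a * (c - ξ ^ 2 * a) - (b - ξ * a) * (b + ξ * a) := by ring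
  calc |a * c - b ^ 2| = |a * (c - ξ ^ 2 * a) - (b - ξ * a) * (b + ξ * a)| := by rw [key]
    _ ≤ |a * (c - ξ ^ 2 * a)| + |(b - ξ * a) * (b + ξ * a)| := abs_sub _ _
    _ = |a| * |c - ξ ^ 2 * a| + |b - ξ * a| * |b + ξ * a| := by rw [abs_mul, abs_mul]
    _ ≤ max |a| (max |b| |c|) * max |b - ξ * a| |c - ξ ^ 2 * a|
        + max |b - ξ * a| |c - ξ ^ 2 * a| * (|b| + |ξ| * |a|) := by
        have h3 : |b + ξ * a| ≤ |b| + |ξ| * |a| := by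
          calc |b + ξ * a| ≤ |b| + |ξ * a| := abs_add_le _ _
            _ = |b| + |ξ| * |a| := by rw [abs_mul]
        exact add_le_add
          (mul_le_mul hN0 hL2 (abs_nonneg _) (le_trans (abs_nonneg a) hN0))
          (mul_le_mul hL1 h3 (abs_nonneg _)
            (le_trans (abs_nonneg _) (le_max_left _ _)))
    _ ≤ (2 + |ξ|) * max |a| (max |b| |c|) * max |b - ξ * a| |c - ξ ^ 2 * a| := by
        have hL0 : (0:ℝ) ≤ max |b - ξ * a| |c - ξ ^ 2 * a| :=
          le_trans (abs_nonneg _) (le_max_left _ _)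
        nlinarith [mul_le_mul_of_nonneg_left hN0 (mul_nonneg (abs_nonneg ξ) hL0),
          mul_le_mul_of_nonneg_left hN1 hL0]
end
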